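/- arXiv:1201.5505 — 5 statements merged into one kernel-verified Lean document; each statement's English description precedes it below -/
import Mathlib

section
/- Every subgroup of a finitely generated nilpotent group is finitely generated. -/
/-!
Induct on the length of the lower central series `γ`. If `γ (n + 1) = 1`, then `N = γ n` is
central, and it is finitely generated: modulo `γ (k + 2)` the commutator map is bimultiplicative
on `γ k × G`, so `γ (k + 1)` is generated modulo `γ (k + 2)` by the commutators `⁅s, t⁆` of
generators `s` of `γ k` (modulo `γ (k + 1)`) with generators `t` of `G`. Hence `γ n` is generated
by the left-normed `n`-fold commutators of a finite generating set of `G`. So `N` is a finitely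
generated abelian group, i.e. a finitely generated `ℤ`-module, and its subgroups are finitely
generated since `ℤ` is Noetherian. As `G ⧸ N` has a shorter lower central series, the image of
a subgroup `H` in `G ⧸ N` is finitely generated by induction, and so is `H`, being an extension
of `H ⊓ N` by that image.
-/

open Subgroup Set
open scoped commutatorElement

section

variable {G : Type*} [Group G]

def iteratedCommutators (T : Set G) : ℕ → Set G
  | 0 => T
  | n + 1 => image2 (⁅·, ·⁆) (iteratedCommutators T n) T

theorem iteratedCommutators_finite {T : Set G} (hT : T.Finite) (n : ℕ) :
    (iteratedCommutators T n).Finite := by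
  induction n with
  | zero => exact hT
  | succ n ih => exact ih.image2 _ hT

namespace Subgroup

theorem fg_of_fg_map_of_fg_inf_ker {G' : Type*} [Group G'] (f : G →* G') {H : Subgroup G}
    (hmap : (H.map f).FG) (hker : (H ⊓ f.ker).FG) : H.FG := by
  obtain ⟨S', hS', hS'fin⟩ := (fg_iff _).mp hmap
  have hS'H : S' ⊆ f '' H := by rw [← coe_map, ← hS']; exact subset_closure
  obtain ⟨T, hTH, hTfin, rfl⟩ := (exists_subset_image_finite_and (p := fun U => U = S')).mp
    ⟨S', hS'H, hS'fin, rfl⟩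
  have hT : (closure T).FG := (fg_iff _).mpr ⟨T, rfl, hTfin⟩
  suffices H = closure T ⊔ (H ⊓ f.ker) from this ▸ hT.sup hker
  refine le_antisymm (fun h hh => ?_) (sup_le ((closure_le H).mpr hTH) inf_le_left)
  obtain ⟨g, hg, hgh⟩ : f h ∈ (closure T).map f := by
    rw [MonoidHom.map_closure, hS']; exact mem_map_of_mem f hh
  have hgH : g ∈ H := (closure_le H).mpr hTH hg
  have hker : g⁻¹ * h ∈ H ⊓ f.ker :=
    ⟨H.mul_mem (H.inv_mem hgH) hh, by simp [hgh]⟩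
  exact mul_inv_cancel_left g h ▸ mul_mem (mem_sup_left hg) (mem_sup_right hker)

theorem fg_of_commGroup {A : Type*} [CommGroup A] [Group.FG A] (B : Subgroup A) :
    B.FG := by
  have : Module.Finite ℤ (Additive A) := Module.Finite.iff_addGroup_fg.mpr inferInstance
  have : IsNoetherian ℤ (Additive A) := isNoetherian_of_isNoetherianRing_of_finite ℤ _
  rw [fg_iff_add_fg, ← AddSubgroup.toIntSubmodule_toAddSubgroup B.toAddSubgroup,
    ← Submodule.fg_iff_addSubgroup_fg]
  exact IsNoetherian.noetherian _

open scoped IsMulCommutative in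
theorem FG.of_le_of_isMulCommutative {A B : Subgroup G} [IsMulCommutative A] (hA : A.FG)
    (hBA : B ≤ A) : B.FG := by
  have : Group.FG A := (Group.fg_iff_subgroup_fg A).mpr hA
  have : Group.FG (B.subgroupOf A) := (Group.fg_iff_subgroup_fg _).mpr (fg_of_commGroup _)
  have : Group.FG B := Group.fg_of_surjective (f := (subgroupOfEquivOfLe hBA).toMonoidHom)
    (subgroupOfEquivOfLe hBA).surjective
  exact (Group.fg_iff_subgroup_fg B).mp this

theorem commutator_sup_left_of_le_center {A Z : Subgroup G} (hZ : Z ≤ center G)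
    (B : Subgroup G) :
    ⁅A ⊔ Z, B⁆ = ⁅A, B⁆ := by
  have : Z.Normal := ⟨fun z hz g => by rwa [mem_center_iff.mp (hZ hz) g, mul_inv_cancel_right]⟩
  refine le_antisymm (commutator_le.mpr fun x hx b hb => ?_) (commutator_mono le_sup_left le_rfl)
  obtain ⟨a, ha, z, hz, rfl⟩ := mem_sup_of_normal_right.mp hx
  have hzb : ⁅z, b⁆ = 1 :=
    commutatorElement_eq_one_iff_mul_comm.mpr (mem_center_iff.mp (hZ hz) b).symm
  rw [commutatorElement_mul_left_eq_conj_mul, hzb, mul_one, mul_inv_cancel, one_mul]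
  exact commutator_mem_commutator ha hb

theorem commutator_closure_eq_closure_image2 {S T : Set G}
    (hcen : ⁅closure S, closure T⁆ ≤ center G) :
    ⁅closure S, closure T⁆ = closure (image2 (⁅·, ·⁆) S T) := by
  set D := closure (image2 (⁅·, ·⁆) S T)
  have hcomm : ∀ a ∈ closure S, ∀ b ∈ closure T, ∀ g, Commute g ⁅a, b⁆ :=
    fun a ha b hb => mem_center_iff.mp (hcen (commutator_mem_commutator ha hb))
  refine le_antisymm (commutator_le.mpr fun a ha b hb => ?_) ((closure_le _).mpr ?_)
  · induction ha using closure_induction with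
    | mem s hs =>
      induction hb using closure_induction with
      | mem t ht => exact subset_closure (mem_image2_of_mem hs ht)
      | one => rw [commutatorElement_one_right]; exact one_mem D
      | mul y z hy hz ihy ihz =>
        rw [commutatorElement_mul_right_eq_mul_conj, mul_assoc _ y, mul_assoc,
          (hcomm s (subset_closure hs) z hz y).mul_inv_cancel]
        exact mul_mem ihy ihz
      | inv y hy ihy =>
        rw [commutatorElement_inv_right, ← commutatorElement_inv,
          (hcomm s (subset_closure hs) y hy y).inv_right.inv_mul_cancel]
        exact inv_mem ihy
    | one => rw [commutatorElement_one_left]; exact one_mem D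
    | mul x y hx hy ihx ihy =>
      rw [commutatorElement_mul_left_eq_conj_mul, (hcomm y hy b hb x).mul_inv_cancel]
      exact mul_mem ihy ihx
    | inv x hx ihx =>
      rw [commutatorElement_inv_left, ← commutatorElement_inv,
        (hcomm x hx b hb x).inv_right.inv_mul_cancel]
      exact inv_mem ihx
  · rintro _ ⟨s, hs, t, ht, rfl⟩
    exact commutator_mem_commutator (subset_closure hs) (subset_closure ht)

theorem map_lowerCentralSeries_top_of_surjective {G' : Type*} [Group G'] {f : G →* G'}
    (hf : Function.Surjective f) (n : ℕ) :
    ((⊤ : Subgroup G).lowerCentralSeries n).map f = (⊤ : Subgroup G').lowerCentralSeries n := by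
  rw [map_lowerCentralSeries, map_top_of_surjective f hf]

theorem lowerCentralSeries_succ_eq_closure_image2_of_eq_bot {S T : Set G} {n : ℕ}
    (hT : closure T = ⊤)
    (hS : (⊤ : Subgroup G).lowerCentralSeries n =
      closure S ⊔ (⊤ : Subgroup G).lowerCentralSeries (n + 1))
    (hbot : (⊤ : Subgroup G).lowerCentralSeries (n + 2) = ⊥) :
    (⊤ : Subgroup G).lowerCentralSeries (n + 1) = closure (image2 (⁅·, ·⁆) S T) := by
  have hcen := commutator_top_right_eq_bot_iff_le_center.mp hbot
  have hST : (⊤ : Subgroup G).lowerCentralSeries (n + 1) = ⁅closure S, closure T⁆ := by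
    rw [lowerCentralSeries_succ, hS, commutator_sup_left_of_le_center hcen, hT]
  rw [hST, commutator_closure_eq_closure_image2 (hST ▸ hcen)]

theorem lowerCentralSeries_succ_eq_closure_image2_sup {S T : Set G} {n : ℕ}
    (hT : closure T = ⊤)
    (hS : (⊤ : Subgroup G).lowerCentralSeries n =
      closure S ⊔ (⊤ : Subgroup G).lowerCentralSeries (n + 1)) :
    (⊤ : Subgroup G).lowerCentralSeries (n + 1) =
      closure (image2 (⁅·, ·⁆) S T) ⊔ (⊤ : Subgroup G).lowerCentralSeries (n + 2) := by
  set K := (⊤ : Subgroup G).lowerCentralSeries (n + 2)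
  set π := QuotientGroup.mk' K
  have hπsurj : Function.Surjective π := QuotientGroup.mk'_surjective K
  have hπ := map_lowerCentralSeries_top_of_surjective hπsurj
  have hQ := lowerCentralSeries_succ_eq_closure_image2_of_eq_bot (S := π '' S) (T := π '' T)
    (by rw [← MonoidHom.map_closure, hT, map_top_of_surjective π hπsurj])
    (by rw [← hπ, ← hπ, hS, map_sup, MonoidHom.map_closure])
    (by rw [← hπ, map_eq_bot_iff, QuotientGroup.ker_mk'])
  rw [← image_image2_distrib (map_commutatorElement π), ← MonoidHom.map_closure, ← hπ] at hQ
  rw [← QuotientGroup.ker_mk' K, ← comap_map_eq, ← hQ, comap_map_eq, QuotientGroup.ker_mk',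
    sup_eq_left.mpr (lowerCentralSeries_antitone _ (Nat.le_succ _))]

theorem lowerCentralSeries_eq_closure_iteratedCommutators_sup {T : Set G} (hT : closure T = ⊤)
    (n : ℕ) :
    (⊤ : Subgroup G).lowerCentralSeries n =
      closure (iteratedCommutators T n) ⊔ (⊤ : Subgroup G).lowerCentralSeries (n + 1) := by
  induction n with
  | zero => rw [lowerCentralSeries_zero, iteratedCommutators, hT, top_sup_eq]
  | succ n ih => exact lowerCentralSeries_succ_eq_closure_image2_sup hT ih

universe u

theorem fg_of_lowerCentralSeries_eq_bot (n : ℕ) :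
    ∀ {G : Type u} [Group G] [Group.FG G], (⊤ : Subgroup G).lowerCentralSeries n = ⊥ →
      ∀ H : Subgroup G, H.FG := by
  induction n with
  | zero =>
    intro G _ _ hbot H
    rw [lowerCentralSeries_zero] at hbot
    rw [le_bot_iff.mp (hbot ▸ le_top : H ≤ ⊥)]
    exact FG.bot
  | succ n ih =>
    intro G _ hG hbot H
    obtain ⟨T, hT, hTfin⟩ := Group.fg_iff.mp hG
    have hN := lowerCentralSeries_eq_closure_iteratedCommutators_sup hT n
    rw [hbot, sup_bot_eq] at hN
    set N := (⊤ : Subgroup G).lowerCentralSeries n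
    have hNfg : N.FG := (fg_iff N).mpr ⟨_, hN.symm, iteratedCommutators_finite hTfin n⟩
    have hNcen : N ≤ center G := commutator_top_right_eq_bot_iff_le_center.mp hbot
    have : IsMulCommutative N :=
      .of_setLike_mul_comm fun a _ b hb => mem_center_iff.mp (hNcen hb) a
    have hQ : (⊤ : Subgroup (G ⧸ N)).lowerCentralSeries n = ⊥ := by
      rw [← map_lowerCentralSeries_top_of_surjective (QuotientGroup.mk'_surjective N),
        map_eq_bot_iff, QuotientGroup.ker_mk']
    refine fg_of_fg_map_of_fg_inf_ker (QuotientGroup.mk' N) (ih hQ _)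
      (hNfg.of_le_of_isMulCommutative ?_)
    rw [QuotientGroup.ker_mk']
    exact inf_le_right

end Subgroup

end

/-- Every subgroup of a finitely generated nilpotent group is finitely
generated (P. Hall). -/
theorem subgroup_of_fg_nilpotent_is_fg (G : Type*) [Group G]
    (hfg : Group.FG G) (hnil : Group.IsNilpotent G) (H : Subgroup G) :
    Group.FG H := by
  obtain ⟨n, hn⟩ := Subgroup.nilpotent_iff_lowerCentralSeries.mp hnil
  exact (Group.fg_iff_subgroup_fg H).mpr (fg_of_lowerCentralSeries_eq_bot n hn H)
end

section
/- Let A and B be linearly (fully) ordered groups, and let X be a subgroup of the Cartesian (unrestricted) wreath product A Wr B such that for every element bφ of X (with b ∈ B and φ: B → A), the support supp(φ) = {x ∈ B : φ(x) ≠ 1} is a well-ordered subset of B. Then X admits a linear order making it a fully ordered group (the order is compatible with multiplication on both sides). -/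
/-!
Take as positive cone the elements `bφ` with `1 < b`, or with `b = 1` and `φ` positive at the
least point of its support. This set is closed under products (the least point of the support of
a product of two positive functions is the smaller of their two least points) and under
conjugation (conjugating by `cψ` translates the support by `c⁻¹` and conjugates the values
pointwise). Well-ordered supports are needed only for totality: a nontrivial `φ` then has a least
point of its support, where `φ` or `φ⁻¹` is positive. A conjugation-invariant total positive
cone in a group defines a bi-invariant linear order.
-/

/-- The action of `B` on the base group `B → A` of the Cartesian wreath
product, so that conjugation by `b` in the wreath product realizes
`f^b (b₀) = f (b₀ * b⁻¹)`. -/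
def wrAct (A B : Type*) [Group A] [Group B] : B →* MulAut (B → A) where
  toFun b :=
    { toFun := fun f x => f (x * b)
      invFun := fun f x => f (x * b⁻¹)
      left_inv := fun f => by funext x; simp [mul_assoc]
      right_inv := fun f => by funext x; simp [mul_assoc]
      map_mul' := fun f g => rfl }
  map_one' := by ext f x; simp
  map_mul' := fun b₁ b₂ => by ext f x; simp [mul_assoc]

/-- The Cartesian (unrestricted) wreath product `A Wr B = B ⋉ A^B`. -/
abbrev Wr (A B : Type*) [Group A] [Group B] : Type _ :=
  SemidirectProduct (B → A) B (wrAct A B)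

@[simp]
theorem wrAct_apply {A B : Type*} [Group A] [Group B] (b : B) (f : B → A) (x : B) :
    wrAct A B b f x = f (x * b) :=
  rfl

theorem one_lt_mul_mul_inv {G : Type*} [Group G] [Preorder G] [MulLeftStrictMono G]
    [MulRightStrictMono G] {a : G} (c : G) (h : 1 < a) : 1 < c * a * c⁻¹ := by
  simpa using mul_lt_mul_left (mul_lt_mul_right h c) c⁻¹

theorem exists_biInvariant_linearOrder_of_positiveCone {G : Type*} [Group G] (P : G → Prop)
    (not_one : ¬ P 1) (mul : ∀ a b, P a → P b → P (a * b))
    (conj : ∀ a c, P a → P (c * a * c⁻¹)) (total : ∀ a, a ≠ 1 → P a ∨ P a⁻¹) :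
    ∃ lo : LinearOrder G,
      ∀ x y z : G, lo.lt x y → lo.lt (x * z) (y * z) ∧ lo.lt (z * x) (z * y) := by
  classical
  let r : G → G → Prop := fun x y => P (y * x⁻¹)
  have : IsStrictTotalOrder G r :=
    { irrefl := fun x hx => not_one (by simpa [r] using hx)
      trans := fun x y z hxy hyz => by simpa [r, mul_assoc] using mul _ _ hyz hxy
      trichotomous := fun x y hxy hyx => by
        by_contra hne
        rcases total (y * x⁻¹) (mt mul_inv_eq_one.mp (Ne.symm hne)) with h | h
        · exact hxy h
        · exact hyx (by simpa [r] using h) }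
  refine ⟨linearOrderOfSTO r, fun x y z (hxy : r x y) => ⟨?_, ?_⟩⟩
  · show P (y * z * (x * z)⁻¹)
    simpa [mul_assoc] using hxy
  · show P (z * y * (z * x)⁻¹)
    simpa [mul_assoc] using conj _ z hxy

section IsLexPositive

variable {A B : Type*}

def IsLexPositive [One A] [LT A] [LT B] (f : B → A) : Prop :=
  ∃ m, (∀ x < m, f x = 1) ∧ 1 < f m

theorem not_isLexPositive_one [One A] [Preorder A] [LT B] : ¬ IsLexPositive (1 : B → A) :=
  fun ⟨_, _, h⟩ => lt_irrefl _ h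

theorem IsLexPositive.mul [MulOneClass A] [Preorder A] [MulLeftStrictMono A] [LinearOrder B]
    {f g : B → A} (hf : IsLexPositive f) (hg : IsLexPositive g) : IsLexPositive (f * g) := by
  obtain ⟨m, hfm, hm⟩ := hf
  obtain ⟨n, hgn, hn⟩ := hg
  refine ⟨min m n, fun x hx => ?_, ?_⟩
  · simp [hfm x (lt_min_iff.mp hx).1, hgn x (lt_min_iff.mp hx).2]
  · rcases lt_trichotomy m n with h | rfl | h
    · simpa [min_eq_left h.le, hgn m h] using hm
    · simpa using Left.one_lt_mul hm hn
    · simpa [min_eq_right h.le, hfm n h] using hn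

theorem IsLexPositive.conj [Group A] [Preorder A] [MulLeftStrictMono A] [MulRightStrictMono A]
    [LT B] {f : B → A} (hf : IsLexPositive f) (c : B → A) : IsLexPositive (c * f * c⁻¹) := by
  obtain ⟨m, hfm, hm⟩ := hf
  exact ⟨m, fun x hx => by simp [hfm x hx], one_lt_mul_mul_inv (c m) hm⟩

theorem IsLexPositive.wrAct [Group A] [LT A] [Group B] [LinearOrder B] [MulRightStrictMono B]
    {f : B → A} (hf : IsLexPositive f) (b : B) : IsLexPositive (wrAct A B b f) := by
  obtain ⟨m, hfm, hm⟩ := hf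
  refine ⟨m * b⁻¹, fun x hx => hfm _ ?_, by simpa using hm⟩
  simpa using mul_lt_mul_left hx b

theorem isLexPositive_or_isLexPositive_inv [Group A] [LinearOrder A] [MulLeftStrictMono A]
    [LinearOrder B] {f : B → A} (hf : (Function.mulSupport f).IsWF) (hne : f ≠ 1) :
    IsLexPositive f ∨ IsLexPositive f⁻¹ := by
  have hS : (Function.mulSupport f).Nonempty :=
    Set.nonempty_iff_ne_empty.mpr (mt Function.mulSupport_eq_empty_iff.mp hne)
  set m := hf.min hS
  have below : ∀ x < m, f x = 1 := fun x hx =>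
    Function.notMem_mulSupport.mp fun hx' => hf.not_lt_min hS hx' hx
  rcases lt_or_gt_of_ne (hf.min_mem hS : f m ≠ 1) with h | h
  · exact Or.inr ⟨m, fun x hx => by simp [below x hx],
      by simpa using Left.one_lt_inv_iff.mpr h⟩
  · exact Or.inl ⟨m, below, h⟩

end IsLexPositive

namespace Wr

variable {A B : Type*} [Group A] [Group B]

theorem conj_left_of_right_eq_one {g : Wr A B} (hg : g.right = 1) (z : Wr A B) :
    (z * g * z⁻¹).left = z.left * wrAct A B z.right g.left * z.left⁻¹ := by
  ext x
  simp [hg]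

variable [LinearOrder A] [LinearOrder B]

def IsPositive (g : Wr A B) : Prop :=
  1 < g.right ∨ g.right = 1 ∧ IsLexPositive g.left

theorem not_isPositive_one : ¬ IsPositive (1 : Wr A B) := by
  rintro (h | ⟨-, h⟩)
  · exact lt_irrefl _ h
  · exact not_isLexPositive_one h

theorem IsPositive.mul [MulLeftStrictMono A] [MulLeftStrictMono B] {g h : Wr A B}
    (hg : IsPositive g) (hh : IsPositive h) : IsPositive (g * h) := by
  rcases hg with hg | ⟨hg1, hg⟩ <;> rcases hh with hh | ⟨hh1, hh⟩
  · exact Or.inl (by simpa using Left.one_lt_mul hg hh)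
  · exact Or.inl (by simpa [hh1] using hg)
  · exact Or.inl (by simpa [hg1] using hh)
  · exact Or.inr ⟨by simp [hg1, hh1], by simpa [hg1] using hg.mul hh⟩

theorem IsPositive.conj [MulLeftStrictMono A] [MulRightStrictMono A] [MulLeftStrictMono B]
    [MulRightStrictMono B] {g : Wr A B} (hg : IsPositive g) (z : Wr A B) :
    IsPositive (z * g * z⁻¹) := by
  rcases hg with hg | ⟨hg1, hg⟩
  · exact Or.inl (by simpa using one_lt_mul_mul_inv z.right hg)
  · refine Or.inr ⟨by simp [hg1], ?_⟩
    rw [conj_left_of_right_eq_one hg1]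
    exact (hg.wrAct z.right).conj z.left

theorem isPositive_or_isPositive_inv [MulLeftStrictMono A] [MulLeftStrictMono B] {g : Wr A B}
    (hg : (Function.mulSupport g.left).IsWF) (hne : g ≠ 1) :
    IsPositive g ∨ IsPositive g⁻¹ := by
  rcases lt_trichotomy g.right 1 with h | h | h
  · exact Or.inr (Or.inl (by simpa using Left.one_lt_inv_iff.mpr h))
  · have hleft : g.left ≠ 1 := fun e => hne (SemidirectProduct.ext e h)
    rcases isLexPositive_or_isLexPositive_inv hg hleft with hl | hl
    · exact Or.inl (Or.inr ⟨h, hl⟩)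
    · refine Or.inr (Or.inr ⟨by simp [h], ?_⟩)
      simpa [h] using hl
  · exact Or.inl (Or.inl h)

end Wr

/-- If `A` and `B` are fully (bi-invariantly linearly) ordered groups and `X`
is a subgroup of the Cartesian wreath product `A Wr B` such that every element
of `X` has well-ordered support in the base coordinate, then `X` can be fully
ordered: there is a linear order on `X` compatible with multiplication on both
sides. -/
theorem subgroup_of_wreath_with_wellOrdered_supports_is_fully_orderable
    (A B : Type*) [Group A] [Group B] [LinearOrder A] [LinearOrder B]
    [CovariantClass A A (· * ·) (· < ·)]
    [CovariantClass A A (Function.swap (· * ·)) (· < ·)]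
    [CovariantClass B B (· * ·) (· < ·)]
    [CovariantClass B B (Function.swap (· * ·)) (· < ·)]
    (X : Subgroup (Wr A B))
    (hsupp : ∀ g ∈ X, Set.IsWF {b : B | SemidirectProduct.left g b ≠ 1}) :
    ∃ lo : LinearOrder X,
      ∀ x y z : X, lo.lt x y → lo.lt (x * z) (y * z) ∧ lo.lt (z * x) (z * y) :=
  exists_biInvariant_linearOrder_of_positiveCone (fun x : X => Wr.IsPositive (x : Wr A B))
    Wr.not_isPositive_one (fun _ _ ha hb => ha.mul hb) (fun _ c ha => ha.conj c)
    (fun a ha => Wr.isPositive_or_isPositive_inv (hsupp a a.2) (by simpa using ha))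
end

section
/- The map Φ: ℚ → (ℚ Wr C) Wr Z sending m/n (with n > 0) to [α^{z^{-n}}, α]^m is a well-defined injective group homomorphism from ℚ into the 2-generator subgroup G = ⟨α, z⟩. -/
open SemidirectProduct Multiplicative

/-- `τⱼ ∈ ℚ^C`: `τⱼ(cⁱ) = -1/j` for `i ≥ 0` and `0` for `i < 0`. -/
def tau (j : ℤ) : Multiplicative ℤ → Multiplicative ℚ :=
  fun i => if 0 ≤ i.toAdd then ofAdd (-(1 / (j : ℚ))) else 1

/-- The element `α` of the base group `(ℚ Wr C)^Z` of `W = (ℚ Wr C) Wr Z`: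
`α(z^j) = 1` for `j < 0`, `α(z⁰) = c`, `α(z^j) = τⱼ` for `j > 0`. -/
def alpha : Multiplicative ℤ → Wr (Multiplicative ℚ) (Multiplicative ℤ) :=
  fun j =>
    if j.toAdd = 0 then inr (ofAdd (1 : ℤ))
    else if 0 < j.toAdd then inl (tau j.toAdd)
    else 1

/-- The commutator `[α^{z^{-n}}, α] = (α^{z^{-n}})⁻¹ α⁻¹ α^{z^{-n}} α` in
`W = (ℚ Wr C) Wr Z`. -/
def commAlpha (n : ℤ) :
    Wr (Wr (Multiplicative ℚ) (Multiplicative ℤ)) (Multiplicative ℤ) :=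
  ((inr (ofAdd (-n)))⁻¹ * inl alpha * inr (ofAdd (-n)))⁻¹ * (inl alpha)⁻¹ *
    ((inr (ofAdd (-n)))⁻¹ * inl alpha * inr (ofAdd (-n))) * inl alpha

namespace Wr

variable {A B : Type*} [Group A] [Group B]

lemma inr_inv_mul_inl_mul_inr (b : B) (f : B → A) :
    ((inr b)⁻¹ * inl f * inr b : Wr A B) = inl fun x => f (x * b⁻¹) := by
  rw [← map_inv, ← inl_aut_inv]
  rfl

def single (A B : Type*) [Group A] [Group B] [DecidableEq B] : A →* Wr A B :=
  inl.comp (MonoidHom.mulSingle (fun _ : B => A) 1)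

variable [DecidableEq B]

lemma single_apply (a : A) : single A B a = inl (Pi.mulSingle 1 a) := rfl

lemma single_injective : Function.Injective (single A B) :=
  inl_injective.comp (Pi.mulSingle_injective (M := fun _ : B => A) 1)

end Wr

open Wr

lemma tau_inv_mul_tau_shift (n : ℤ) (i : Multiplicative ℤ) :
    (tau n i)⁻¹ * tau n (i * (ofAdd 1)⁻¹) =
      (Pi.mulSingle 1 (ofAdd (1 / (n : ℚ))) : Multiplicative ℤ → Multiplicative ℚ) i := by
  obtain ⟨k, rfl⟩ := ofAdd.surjective i
  rw [← ofAdd_neg, ← ofAdd_add]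
  simp only [Pi.mulSingle_apply, ofAdd_eq_one, tau, toAdd_ofAdd, ← sub_eq_add_neg]
  rcases lt_trichotomy k 0 with hk | rfl | hk
  · simp [hk.ne, hk.not_ge, show ¬ 1 ≤ k by omega]
  · simp
  · simp [hk.ne', hk.le, show 1 ≤ k by omega]

lemma commAlpha_eq_inl (n : ℤ) :
    commAlpha n = inl fun x =>
      (alpha (x * ofAdd n))⁻¹ * (alpha x)⁻¹ * alpha (x * ofAdd n) * alpha x := by
  simp only [commAlpha, inr_inv_mul_inl_mul_inr, ← ofAdd_neg, neg_neg]
  simp only [← map_inv, ← map_mul]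
  rfl

lemma commutator_tau_generator (n : ℤ) :
    (inl (tau n))⁻¹ * (inr (ofAdd 1))⁻¹ * inl (tau n) * inr (ofAdd 1) =
      single _ _ (ofAdd (1 / (n : ℚ))) := by
  rw [mul_assoc (inl _)⁻¹, mul_assoc (inl _)⁻¹, inr_inv_mul_inl_mul_inr,
    ← map_inv, ← map_mul, single_apply]
  exact congrArg inl (funext (tau_inv_mul_tau_shift n))

lemma commAlpha_eq_single_single {n : ℤ} (hn : 0 < n) :
    commAlpha n = single _ _ (single _ _ (ofAdd (1 / (n : ℚ)))) := by
  rw [commAlpha_eq_inl, single_apply]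
  congr 1
  funext x
  obtain ⟨k, rfl⟩ := ofAdd.surjective x
  rw [← ofAdd_add]
  simp only [Pi.mulSingle_apply, ofAdd_eq_one]
  rcases lt_trichotomy k 0 with hk | rfl | hk
  · rw [show alpha (ofAdd k) = 1 by simp [alpha, hk.ne, hk.not_gt]]
    simp [hk.ne]
  · simpa [alpha, hn, hn.ne'] using commutator_tau_generator n
  · have hkn : 0 < k + n := by omega
    simp only [alpha, toAdd_ofAdd, hk, hk.ne', hkn, hkn.ne', if_true, if_false]
    -- both coordinates lie in the abelian base group `ℚ^C`
    rw [← map_inv, ← map_inv, ← map_mul, ← map_mul, ← map_mul, mul_right_comm _ (tau k)⁻¹,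
      inv_mul_cancel, one_mul, inv_mul_cancel, map_one]

local notation "W" => Wr (Wr (Multiplicative ℚ) (Multiplicative ℤ)) (Multiplicative ℤ)

lemma commAlpha_mem_closure (n : ℤ) :
    commAlpha n ∈ Subgroup.closure {inl alpha, inr (ofAdd (1 : ℤ))} := by
  have hα : inl alpha ∈ Subgroup.closure ({inl alpha, inr (ofAdd 1)} : Set W) :=
    Subgroup.subset_closure (Set.mem_insert _ _)
  have hz : (inr (ofAdd (-n)) : W) ∈ Subgroup.closure {inl alpha, inr (ofAdd 1)} := by
    rw [show ofAdd (-n) = ofAdd (1 : ℤ) ^ (-n) by rw [← ofAdd_zsmul, smul_eq_mul, mul_one],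
      map_zpow]
    exact zpow_mem (Subgroup.subset_closure (Set.mem_insert_of_mem _ (Set.mem_singleton _))) _
  unfold commAlpha
  have hconj := mul_mem (mul_mem (inv_mem hz) hα) hz
  exact mul_mem (mul_mem (mul_mem (inv_mem hconj) (inv_mem hα)) hconj) hα

/-- The map `Φ : ℚ → (ℚ Wr C) Wr Z`, `m/n ↦ [α^{z^{-n}}, α]^m` (for `n > 0`),
is a well-defined injective group homomorphism whose image lies in the
2-generator subgroup `G = ⟨α, z⟩`. -/
theorem exists_embedding_of_q_into_two_generator_subgroup :
    ∃ Φ : Multiplicative ℚ →*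
        Wr (Wr (Multiplicative ℚ) (Multiplicative ℤ)) (Multiplicative ℤ),
      Function.Injective Φ ∧
      (∀ m n : ℤ, 0 < n →
        Φ (ofAdd ((m : ℚ) / (n : ℚ))) = (commAlpha n) ^ m) ∧
      (∀ q : Multiplicative ℚ,
        Φ q ∈ Subgroup.closure {inl alpha, inr (ofAdd (1 : ℤ))}) := by
  have hΦ (m n : ℤ) (hn : 0 < n) :
      (single _ _).comp (single _ _) (ofAdd ((m : ℚ) / n)) = commAlpha n ^ m := by
    rw [div_eq_mul_one_div, ← zsmul_eq_mul, ofAdd_zsmul, map_zpow, commAlpha_eq_single_single hn]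
    rfl
  refine ⟨(single _ _).comp (single _ _), single_injective.comp single_injective, hΦ, fun q => ?_⟩
  have hq : q = ofAdd ((q.toAdd.num : ℚ) / ((q.toAdd.den : ℤ) : ℚ)) := by
    rw [Int.cast_natCast, Rat.num_div_den, ofAdd_toAdd]
  rw [hq, hΦ _ _ (by exact_mod_cast q.toAdd.pos)]
  exact zpow_mem (commAlpha_mem_closure _) _
end

section
/- There exists a 2-generator solvable group G of derived length 3 containing a subgroup isomorphic to the additive group ℚ of rational numbers. -/
/-!
Take the central extension of the wreath product `ℤ ≀ ℤ = (ℤ →₀ ℤ) ⋊ ℤ` by `ℚ` given by the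
shift-invariant bilinear cocycle `ω(δᵢ, δⱼ) = g (j - i)`, where `g n = 1 / n!` for `n > 0` and
`g n = 0` otherwise. The commutator of the lamps `δ₀` and `δₙ` is the central element
`g n - g (-n) = 1 / n!`; these generate `ℚ`, so the shift `t` and `δ₀` generate the whole group.
Modulo its central `ℚ` the group is the metabelian `ℤ ≀ ℤ`, so its derived length is at most `3`,
and it is exactly `3` because `⁅⁅t, δ₀⁆, ⁅t², δ₀⁆⁆` is a nonzero central element.
-/

open scoped commutatorElement

theorem derivedSeries_succ_le_map_of_le_range {G H : Type*} [Group G] [Group H] (f : H →* G)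
    (hf : derivedSeries G 1 ≤ f.range) (n : ℕ) :
    derivedSeries G (n + 1) ≤ (derivedSeries H n).map f := by
  induction n with
  | zero => simpa [← MonoidHom.range_eq_map] using hf
  | succ n ih => exact (Subgroup.commutator_mono ih ih).trans (Subgroup.map_commutator _ _ _).ge

namespace SemidirectProduct

variable {N G : Type*} [Group N] [Group G] {φ : G →* MulAut N}

lemma commutatorElement_inr_inl (g : G) (n : N) :
    ⁅(inr g : N ⋊[φ] G), (inl n : N ⋊[φ] G)⁆ = inl (φ g n * n⁻¹) := by
  rw [commutatorElement_def, ← map_inv (inr : G →* N ⋊[φ] G), ← inl_aut, ← map_inv inl,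
    ← map_mul]

lemma derivedSeries_one_le_range_inl {G : Type*} [CommGroup G] {φ : G →* MulAut N} :
    derivedSeries (N ⋊[φ] G) 1 ≤ (inl : N →* N ⋊[φ] G).range := by
  rw [range_inl_eq_ker_rightHom, derivedSeries_one]
  exact Abelianization.commutator_subset_ker _

end SemidirectProduct

/-- The central extension of `M` by `A` with the bilinear cocycle `ω`. -/
@[ext]
structure Heisenberg {A M : Type*} [AddCommGroup A] [AddCommGroup M] (ω : M →+ M →+ A) where
  z : A
  v : M

namespace Heisenberg

variable {A M : Type*} [AddCommGroup A] [AddCommGroup M] {ω : M →+ M →+ A}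

instance : Mul (Heisenberg ω) := ⟨fun p q => ⟨p.z + q.z + ω p.v q.v, p.v + q.v⟩⟩
instance : One (Heisenberg ω) := ⟨⟨0, 0⟩⟩
instance : Inv (Heisenberg ω) := ⟨fun p => ⟨-p.z + ω p.v p.v, -p.v⟩⟩

@[simp] lemma mul_z (p q : Heisenberg ω) : (p * q).z = p.z + q.z + ω p.v q.v := rfl
@[simp] lemma mul_v (p q : Heisenberg ω) : (p * q).v = p.v + q.v := rfl
@[simp] lemma one_z : (1 : Heisenberg ω).z = 0 := rfl
@[simp] lemma one_v : (1 : Heisenberg ω).v = 0 := rfl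
@[simp] lemma inv_z (p : Heisenberg ω) : p⁻¹.z = -p.z + ω p.v p.v := rfl
@[simp] lemma inv_v (p : Heisenberg ω) : p⁻¹.v = -p.v := rfl

instance : Group (Heisenberg ω) :=
  Group.ofLeftAxioms
    (fun p q r => by ext <;> simp only [mul_z, mul_v, map_add, AddMonoidHom.add_apply] <;> abel)
    (fun p => by ext <;> simp)
    (fun p => by ext <;> simp)

variable (ω) in
def ofCenter : Multiplicative A →* Heisenberg ω where
  toFun a := ⟨a.toAdd, 0⟩
  map_one' := rfl
  map_mul' a b := by ext <;> simp

@[simp] lemma ofCenter_z (a : Multiplicative A) : (ofCenter ω a).z = a.toAdd := rfl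
@[simp] lemma ofCenter_v (a : Multiplicative A) : (ofCenter ω a).v = 0 := rfl

lemma ofCenter_injective : Function.Injective (ofCenter ω) :=
  fun _ _ h => congrArg z h

lemma mul_ofCenter (p : Heisenberg ω) (a : Multiplicative A) :
    p * ofCenter ω a = ⟨p.z + a.toAdd, p.v⟩ := by
  ext <;> simp

variable (ω) in
def proj : Heisenberg ω →* Multiplicative M where
  toFun p := .ofAdd p.v
  map_one' := rfl
  map_mul' _ _ := rfl

lemma zpow_v (p : Heisenberg ω) (k : ℤ) : (p ^ k).v = k • p.v :=
  congrArg Multiplicative.toAdd (map_zpow (proj ω) p k)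

lemma commutatorElement_eq (p q : Heisenberg ω) :
    ⁅p, q⁆ = ofCenter ω (.ofAdd (ω p.v q.v - ω q.v p.v)) := by
  ext <;> simp only [commutatorElement_def, mul_z, mul_v, inv_z, inv_v, ofCenter_z, ofCenter_v,
    toAdd_ofAdd, map_add, map_neg, AddMonoidHom.add_apply, AddMonoidHom.neg_apply] <;> abel

lemma derivedSeries_one_le_range_ofCenter :
    derivedSeries (Heisenberg ω) 1 ≤ (ofCenter ω).range := by
  rw [derivedSeries_one, commutator_def, Subgroup.commutator_le]
  exact fun p _ q _ => by rw [commutatorElement_eq]; exact ⟨_, rfl⟩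

lemma derivedSeries_two_eq_bot : derivedSeries (Heisenberg ω) 2 = ⊥ := by
  refine le_bot_iff.mp ((derivedSeries_succ_le_map_of_le_range _
    derivedSeries_one_le_range_ofCenter 1).trans ?_)
  rw [derivedSeries_one, commutator_eq_bot, Subgroup.map_bot]

lemma derivedSeries_three_semidirectProduct_eq_bot {P : Type*} [CommGroup P]
    (φ : P →* MulAut (Heisenberg ω)) : derivedSeries (Heisenberg ω ⋊[φ] P) 3 = ⊥ := by
  refine le_bot_iff.mp ((derivedSeries_succ_le_map_of_le_range _
    SemidirectProduct.derivedSeries_one_le_range_inl 2).trans ?_)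
  rw [derivedSeries_two_eq_bot, Subgroup.map_bot]

lemma eq_top_of_range_ofCenter_le {K : Subgroup (Heisenberg ω)} (hZ : (ofCenter ω).range ≤ K)
    (hK : ∀ u, ∃ p ∈ K, p.v = u) : K = ⊤ := by
  refine eq_top_iff.mpr fun x _ => ?_
  obtain ⟨p, hp, hpx⟩ := hK x.v
  have hx : x = p * ofCenter ω (.ofAdd (x.z - p.z)) := by
    rw [mul_ofCenter]; ext <;> simp [hpx]
  exact hx ▸ K.mul_mem hp (hZ ⟨_, rfl⟩)

def congr (σ : M ≃+ M) (hσ : ∀ u v, ω (σ u) (σ v) = ω u v) : Heisenberg ω ≃* Heisenberg ω where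
  toFun p := ⟨p.z, σ p.v⟩
  invFun p := ⟨p.z, σ.symm p.v⟩
  left_inv p := by simp
  right_inv p := by simp
  map_mul' p q := by ext <;> simp [hσ]

def mulAutHom {P : Type*} [AddGroup P] (ρ : P →+ AddAut M)
    (hρ : ∀ g u v, ω (ρ g u) (ρ g v) = ω u v) : Multiplicative P →* MulAut (Heisenberg ω) where
  toFun g := congr (ρ g.toAdd) (hρ g.toAdd)
  map_one' := by ext <;> simp [congr]
  map_mul' g h := by ext <;> simp [congr, AddAut.add_apply]

@[simp] lemma mulAutHom_apply {P : Type*} [AddGroup P] (ρ : P →+ AddAut M) (hρ)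
    (g : Multiplicative P) (p : Heisenberg ω) : mulAutHom ρ hρ g p = ⟨p.z, ρ g.toAdd p.v⟩ := rfl

end Heisenberg

section Toeplitz

variable {ι A : Type*} [AddCommGroup ι] [AddCommGroup A]

open Finsupp

noncomputable def toeplitzForm (g : ι → A) : (ι →₀ ℤ) →+ (ι →₀ ℤ) →+ A :=
  liftAddHom fun i => zmultiplesHom _ (liftAddHom fun j => zmultiplesHom A (g (j - i)))

@[simp] lemma toeplitzForm_single_single (g : ι → A) (i j : ι) (a b : ℤ) :
    toeplitzForm g (single i a) (single j b) = a • b • g (j - i) := by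
  simp [toeplitzForm]

variable (ι) in
noncomputable def shift : ι →+ AddAut (ι →₀ ℤ) where
  toFun n := Finsupp.domCongr (Equiv.addRight n)
  map_zero' := by ext; simp [-Equiv.addRight_zero]
  map_add' m n := by ext; simp [-Equiv.addRight_add, AddAut.add_apply, add_assoc, add_comm]

@[simp] lemma shift_single (n i : ι) (a : ℤ) : shift ι n (single i a) = single (i + n) a := by
  simp [shift]

lemma toeplitzForm_shift (g : ι → A) (n : ι) (u v : ι →₀ ℤ) :
    toeplitzForm g (shift ι n u) (shift ι n v) = toeplitzForm g u v := by
  induction u using induction_linear with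
  | zero => simp
  | add u₁ u₂ h₁ h₂ => simp [h₁, h₂]
  | single i a =>
    induction v using induction_linear with
    | zero => simp
    | add v₁ v₂ h₁ h₂ => simp_all
    | single j b => simp

end Toeplitz

open Heisenberg SemidirectProduct

section TwistedWreath

variable {A : Type*} [AddCommGroup A]

/-- A central extension by `A` of the wreath product `ℤ ≀ ι = (ι →₀ ℤ) ⋊ ι`. -/
abbrev TwistedWreath {ι : Type*} [AddCommGroup ι] (g : ι → A) :=
  Heisenberg (toeplitzForm g) ⋊[mulAutHom (shift ι) (toeplitzForm_shift g)] Multiplicative ι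

namespace TwistedWreath

variable (g : ℤ → A)

@[simps]
noncomputable def lamp (i : ℤ) : Heisenberg (toeplitzForm g) := ⟨0, Finsupp.single i 1⟩

noncomputable def shiftGen : TwistedWreath g := inr (.ofAdd 1)

noncomputable def lampGen : TwistedWreath g := inl (lamp g 0)

lemma inr_ofAdd_eq (i : ℤ) : (inr (.ofAdd i) : TwistedWreath g) = shiftGen g ^ i := by
  rw [shiftGen, ← map_zpow, ← ofAdd_zsmul, smul_eq_mul, mul_one]

lemma inl_lamp_eq (i : ℤ) : (inl (lamp g i) : TwistedWreath g) =
    inr (.ofAdd i) * lampGen g * (inr (.ofAdd i))⁻¹ := by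
  rw [lampGen, ← map_inv, ← inl_aut, mulAutHom_apply]
  ext <;> simp

lemma commutatorElement_inl_lamp (i j : ℤ) :
    ⁅(inl (lamp g i) : TwistedWreath g), (inl (lamp g j) : TwistedWreath g)⁆ =
      (inl (ofCenter _ (.ofAdd (g (j - i) - g (i - j)))) : TwistedWreath g) := by
  rw [← map_commutatorElement, commutatorElement_eq]
  simp

variable {g}

lemma inr_mem_closure (i : Multiplicative ℤ) :
    inr i ∈ Subgroup.closure {shiftGen g, lampGen g} :=
  inr_ofAdd_eq g i.toAdd ▸ zpow_mem (Subgroup.subset_closure (by simp)) _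

lemma inl_lamp_mem_closure (i : ℤ) :
    inl (lamp g i) ∈ Subgroup.closure {shiftGen g, lampGen g} := by
  rw [inl_lamp_eq]
  exact mul_mem (mul_mem (inr_mem_closure _) (Subgroup.subset_closure (by simp)))
    (inv_mem (inr_mem_closure _))

lemma inl_ofCenter_mem_closure
    (hg : AddSubgroup.closure (Set.range fun n => g n - g (-n)) = ⊤) (a : Multiplicative A) :
    inl (ofCenter _ a) ∈ Subgroup.closure {shiftGen g, lampGen g} := by
  suffices hle : AddSubgroup.closure (Set.range fun n => g n - g (-n)) ≤
      ((Subgroup.closure {shiftGen g, lampGen g}).comap (inl.comp (ofCenter _))).toAddSubgroup'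
    from (Subgroup.mem_toAddSubgroup' _ a.toAdd).mp (hle (hg ▸ AddSubgroup.mem_top _))
  rw [AddSubgroup.closure_le]
  rintro _ ⟨n, rfl⟩
  have hmem := Subgroup.commutator_le_self _ <| Subgroup.commutator_mem_commutator
    (inl_lamp_mem_closure (g := g) 0) (inl_lamp_mem_closure n)
  rw [commutatorElement_inl_lamp, sub_zero, zero_sub] at hmem
  simpa using hmem

theorem closure_eq_top (hg : AddSubgroup.closure (Set.range fun n => g n - g (-n)) = ⊤) :
    Subgroup.closure {shiftGen g, lampGen g} = ⊤ := by
  set C := Subgroup.closure {shiftGen g, lampGen g}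
  have hN : C.comap inl = ⊤ := by
    refine eq_top_of_range_ofCenter_le ?_ fun u => ?_
    · rintro _ ⟨a, rfl⟩
      exact inl_ofCenter_mem_closure hg a
    induction u using Finsupp.induction_linear with
    | zero => exact ⟨1, one_mem _, rfl⟩
    | add u₁ u₂ h₁ h₂ =>
      obtain ⟨p₁, hp₁, rfl⟩ := h₁
      obtain ⟨p₂, hp₂, rfl⟩ := h₂
      exact ⟨p₁ * p₂, mul_mem hp₁ hp₂, rfl⟩
    | single i k =>
      have hi : lamp g i ∈ C.comap inl := inl_lamp_mem_closure i
      exact ⟨lamp g i ^ k, zpow_mem hi k, by simp [zpow_v]⟩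
  refine eq_top_iff.mpr fun x _ => ?_
  rw [← inl_left_mul_inr_right x]
  exact mul_mem (hN.ge (Subgroup.mem_top x.left)) (inr_mem_closure _)

theorem derivedSeries_two_ne_bot (hg : g 2 - g (-2) ≠ 2 • (g 1 - g (-1))) :
    derivedSeries (TwistedWreath g) 2 ≠ ⊥ := by
  have hw : ⁅⁅inr (.ofAdd 1 : Multiplicative ℤ), lampGen g⁆,
      ⁅inr (.ofAdd 2 : Multiplicative ℤ), lampGen g⁆⁆ ∈ derivedSeries (TwistedWreath g) 2 :=
    Subgroup.commutator_mem_commutator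
      (Subgroup.commutator_mem_commutator (Subgroup.mem_top _) (Subgroup.mem_top _))
      (Subgroup.commutator_mem_commutator (Subgroup.mem_top _) (Subgroup.mem_top _))
  intro h
  rw [lampGen, commutatorElement_inr_inl, commutatorElement_inr_inl, ← map_commutatorElement,
    commutatorElement_eq, h, Subgroup.mem_bot, map_eq_one_iff _ inl_injective,
    map_eq_one_iff _ ofCenter_injective, ofAdd_eq_one] at hw
  simp only [mul_v, inv_v, lamp_v, mulAutHom_apply, toAdd_ofAdd, shift_single, zero_add, map_add,
    map_neg, AddMonoidHom.add_apply, AddMonoidHom.neg_apply, toeplitzForm_single_single,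
    one_smul] at hw
  norm_num at hw
  exact hg (by rw [← sub_eq_zero, ← neg_eq_zero, ← hw]; abel)

end TwistedWreath

end TwistedWreath

open Nat in
theorem Rat.addSubgroup_closure_range_inv_factorial_succ :
    AddSubgroup.closure (Set.range fun k : ℕ => (((k + 1)! : ℕ) : ℚ)⁻¹) = ⊤ := by
  refine eq_top_iff.mpr fun q _ => ?_
  obtain ⟨k, hk⟩ : ∃ k, q.den = k + 1 := Nat.exists_eq_succ_of_ne_zero q.den_nz
  have hq : q = (q.num * k !) • (((k + 1)! : ℕ) : ℚ)⁻¹ := by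
    rw [zsmul_eq_mul, Nat.factorial_succ, ← hk]
    push_cast
    field_simp
    exact q.mul_den_eq_num
  rw [hq]
  exact zsmul_mem (AddSubgroup.subset_closure (Set.mem_range_self k)) _

def invFactorial (n : ℤ) : ℚ := if 0 < n then (n.toNat.factorial : ℚ)⁻¹ else 0

lemma addSubgroup_closure_range_invFactorial_sub :
    AddSubgroup.closure (Set.range fun n => invFactorial n - invFactorial (-n)) = ⊤ := by
  refine eq_top_mono (AddSubgroup.closure_mono ?_) Rat.addSubgroup_closure_range_inv_factorial_succ
  rintro _ ⟨k, rfl⟩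
  exact ⟨k + 1, by simp [invFactorial]⟩

/-- There exists a 2-generator solvable group of derived length 3 containing a
subgroup isomorphic to the additive group ℚ of rational numbers. -/
theorem exists_two_generator_solvable_length_three_containing_q :
    ∃ (G : Type) (_ : Group G),
      (∃ a b : G, Subgroup.closure {a, b} = ⊤) ∧
      derivedSeries G 3 = ⊥ ∧ derivedSeries G 2 ≠ ⊥ ∧
      ∃ Q : Subgroup G, Nonempty (Q ≃* Multiplicative ℚ) :=
  ⟨TwistedWreath invFactorial, inferInstance,
    ⟨_, _, TwistedWreath.closure_eq_top addSubgroup_closure_range_invFactorial_sub⟩,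
    derivedSeries_three_semidirectProduct_eq_bot _,
    TwistedWreath.derivedSeries_two_ne_bot (by simp [invFactorial]; norm_num [Nat.factorial]),
    _, ⟨(MonoidHom.ofInjective (f := inl.comp (ofCenter _))
      (inl_injective.comp ofCenter_injective)).symm⟩⟩
end

section
/- Let T Wr C be a Cartesian wreath product with C = ⟨c⟩ infinite cyclic, and for g ∈ T define π_g ∈ T^C by π_g(cⁱ) = g for i ≥ 0 and 1 for i < 0, and ρ_g ∈ T^C by ρ_g(c⁰) = g and ρ_g(cⁱ) = 1 for i ≠ 0. Then [π_{g⁻¹}, c] = ρ_g, and consequently the map g ↦ ρ_g is an injective homomorphism of T into the derived subgroup of D = ⟨π_g, c : g ∈ T⟩. -/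
open SemidirectProduct Multiplicative

theorem Wr.inl_inv_mul_inr_inv_mul_inl_mul_inr {A B : Type*} [Group A] [Group B]
    (f : B → A) (b : B) :
    (inl f : Wr A B)⁻¹ * (inr b)⁻¹ * inl f * inr b = inl (fun x => (f x)⁻¹ * f (x * b⁻¹)) := by
  have hconj : (inr b : Wr A B)⁻¹ * inl f * inr b = inl (wrAct A B b⁻¹ f) := by
    rw [inl_aut, inv_inv, map_inv]
  calc (inl f : Wr A B)⁻¹ * (inr b)⁻¹ * inl f * inr b
      = (inl f)⁻¹ * ((inr b)⁻¹ * inl f * inr b) := by group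
    _ = inl (f⁻¹ * wrAct A B b⁻¹ f) := by
      rw [hconj, map_mul, map_inv (inl : (B → A) →* Wr A B) f]
    _ = inl (fun x => (f x)⁻¹ * f (x * b⁻¹)) := rfl

theorem step_inv_mul_step_shift {T : Type*} [Group T] (g : T) (i : Multiplicative ℤ) :
    (if 0 ≤ i.toAdd then g⁻¹ else 1)⁻¹ *
        (if 0 ≤ (i * (ofAdd (1 : ℤ))⁻¹).toAdd then g⁻¹ else 1) =
      (Pi.mulSingle 1 g : Multiplicative ℤ → T) i := by
  simp only [Pi.mulSingle_apply, ← toAdd_eq_zero, toAdd_mul, toAdd_inv, toAdd_ofAdd]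
  split_ifs <;> first | omega | group

theorem Subgroup.inv_mul_inv_mul_mul_mem_commutator {G : Type*} [Group G] {H : Subgroup G}
    {x y : G} (hx : x ∈ H) (hy : y ∈ H) : x⁻¹ * y⁻¹ * x * y ∈ ⁅H, H⁆ := by
  simpa only [commutatorElement_def, inv_inv] using
    Subgroup.commutator_mem_commutator (inv_mem hx) (inv_mem hy)

open SemidirectProduct Multiplicative in
/-- In `T Wr C` with `C = ⟨c⟩` infinite cyclic, with `π_g(cⁱ) = g` for `i ≥ 0`
and `1` for `i < 0`, and `ρ_g` supported at `c⁰` with value `g`, one has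
`[π_{g⁻¹}, c] = π_{g⁻¹}⁻¹ c⁻¹ π_{g⁻¹} c = ρ_g`; consequently `g ↦ ρ_g` is an
injective homomorphism of `T` into the derived subgroup of
`D = ⟨π_g, c : g ∈ T⟩`. -/
theorem rho_embedding_into_derived_subgroup (T : Type*) [Group T]
    (π ρ : T → (Multiplicative ℤ → T))
    (hπ : ∀ (g : T) (i : Multiplicative ℤ), π g i = if 0 ≤ i.toAdd then g else 1)
    (hρ : ∀ (g : T) (i : Multiplicative ℤ), ρ g i = if i.toAdd = 0 then g else 1) :
    (∀ g : T,
      (inl (π g⁻¹) : Wr T (Multiplicative ℤ))⁻¹ * (inr (ofAdd (1 : ℤ)))⁻¹ *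
        inl (π g⁻¹) * inr (ofAdd (1 : ℤ)) = inl (ρ g)) ∧
    ∃ f : T →* Wr T (Multiplicative ℤ),
      Function.Injective f ∧ (∀ g : T, f g = inl (ρ g)) ∧
      ∀ g : T, f g ∈
        ⁅(Subgroup.closure
            ({inr (ofAdd (1 : ℤ))} ∪ Set.range fun g : T => (inl (π g) : Wr T (Multiplicative ℤ)))),
          (Subgroup.closure
            ({inr (ofAdd (1 : ℤ))} ∪ Set.range fun g : T => (inl (π g) : Wr T (Multiplicative ℤ))))⁆ := by
  have hρ_mulSingle : ρ = fun g => (Pi.mulSingle 1 g : Multiplicative ℤ → T) := by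
    funext g i
    simp only [hρ, Pi.mulSingle_apply, toAdd_eq_zero]
  have hcomm : ∀ g : T,
      (inl (π g⁻¹) : Wr T (Multiplicative ℤ))⁻¹ * (inr (ofAdd (1 : ℤ)))⁻¹ *
        inl (π g⁻¹) * inr (ofAdd (1 : ℤ)) = inl (ρ g) := fun g => by
    rw [Wr.inl_inv_mul_inr_inv_mul_inl_mul_inr, hρ_mulSingle]
    congr 1
    funext i
    simp only [hπ]
    exact step_inv_mul_step_shift g i
  let f : T →* Wr T (Multiplicative ℤ) :=
    inl.comp (MonoidHom.mulSingle (fun _ : Multiplicative ℤ => T) 1)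
  have hf_injective : Function.Injective f := fun _ _ h =>
    Pi.mulSingle_injective (M := fun _ => T) 1 (inl_injective h)
  have hf : ∀ g : T, f g = inl (ρ g) := by simp [f, hρ_mulSingle]
  refine ⟨hcomm, f, hf_injective, hf, fun g => ?_⟩
  rw [hf, ← hcomm]
  exact Subgroup.inv_mul_inv_mul_mul_mem_commutator
    (Subgroup.subset_closure (Or.inr ⟨g⁻¹, rfl⟩)) (Subgroup.subset_closure (Or.inl rfl))
end
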